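/- arXiv:0811.2895 — 4 statements merged into one kernel-verified Lean document; each statement's English description precedes it below -/
import Mathlib

section
/- Let V be a vector space over an infinite field K. Suppose V is written as a union V = ⋃_{i∈I} W_i of proper linear K-subspaces W_i of V such that the supremum sup_{i∈I} dim_K(W_i) is finite. Then the index set satisfies |I| ≥ |K|. -/
/-!
If no single `W i` contains both `x` and `y`, then the points `x + t • y` of the line through `x`
in direction `y` lie in pairwise distinct `W i`, so `|K| ≤ |I|`. Such a pair exists: otherwise
pick `W j` of maximal dimension and `y ∉ W j`; the subspaces `W i ⊓ W j` with `y ∈ W i` cover `W j`,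
are proper in `W j` by maximality, and have smaller dimension, so one can induct on the dimension.
-/

universe u v w

open Cardinal Module

variable {K : Type u} {V : Type v} [Field K] [AddCommGroup V] [Module K V]

theorem lift_mk_le_of_forall_add_smul_mem {ι : Type w} (W : ι → Submodule K V) {x y : V}
    (hline : ∀ t : K, ∃ i, x + t • y ∈ W i) (hsep : ∀ i, x ∈ W i → y ∉ W i) :
    lift.{w} #K ≤ lift.{u} #ι := by
  choose f hf using hline
  refine lift_mk_le'.mpr ⟨⟨f, fun s t hst => by_contra fun hne => ?_⟩⟩
  have hy : y ∈ W (f t) := by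
    have : (s - t) • y ∈ W (f t) := by
      convert sub_mem (hst ▸ hf s) (hf t) using 1
      module
    exact (Submodule.smul_mem_iff _ (sub_ne_zero.mpr hne)).mp this
  exact hsep _ (by simpa using sub_mem (hf t) (Submodule.smul_mem _ t hy)) hy

theorem exists_forall_finrank_le_of_rank_le {ι : Type w} [Nonempty ι] (W : ι → Submodule K V)
    {n : ℕ} (hrank : ∀ i, Module.rank K (W i) ≤ n) :
    ∃ j, ∀ i, finrank K (W i) ≤ finrank K (W j) := by
  have hbdd : BddAbove (Set.range fun i => finrank K (W i)) :=
    ⟨n, Set.forall_mem_range.mpr fun i => finrank_le_of_rank_le (hrank i)⟩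
  obtain ⟨_, ⟨j, rfl⟩, hj⟩ := hbdd.exists_isGreatest_of_nonempty (Set.range_nonempty _)
  exact ⟨j, fun i => hj ⟨i, rfl⟩⟩

theorem lift_mk_le_of_forall_mem_of_rank_le (n : ℕ) :
    ∀ {ι : Type w} (U : Submodule K V) (W : ι → Submodule K V), (∀ i, W i < U) →
      (∀ u ∈ U, ∃ i, u ∈ W i) → (∀ i, Module.rank K (W i) ≤ n) →
      lift.{w} #K ≤ lift.{u} #ι := by
  induction n with
  | zero =>
    intro ι U W hlt hcover hrank
    obtain ⟨i, -⟩ := hcover 0 U.zero_mem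
    obtain ⟨u, hu, hui⟩ := SetLike.exists_of_lt (hlt i)
    obtain ⟨j, huj⟩ := hcover u hu
    have hj : W j = ⊥ := Submodule.rank_eq_zero.mp (le_zero_iff.mp (by exact_mod_cast hrank j))
    rw [hj, Submodule.mem_bot] at huj
    exact absurd (huj ▸ (W i).zero_mem) hui
  | succ n ih =>
    intro ι U W hlt hcover hrank
    by_cases hpair : ∃ x ∈ U, ∃ y ∈ U, ∀ i, x ∈ W i → y ∉ W i
    · obtain ⟨x, hx, y, hy, hsep⟩ := hpair
      exact lift_mk_le_of_forall_add_smul_mem W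
        (fun t => hcover _ (U.add_mem hx (U.smul_mem t hy))) hsep
    push Not at hpair
    have hfin (i : ι) : FiniteDimensional K (W i) :=
      rank_lt_aleph0_iff.mp ((hrank i).trans_lt natCast_lt_aleph0)
    have : Nonempty ι := (hcover 0 U.zero_mem).nonempty
    obtain ⟨j, hj⟩ := exists_forall_finrank_le_of_rank_le W hrank
    obtain ⟨y, hyU, hyj⟩ := SetLike.exists_of_lt (hlt j)
    let W' (i : {i // y ∈ W i}) : Submodule K V := W i ⊓ W j
    have hW'lt (i : {i // y ∈ W i}) : W' i < W j :=
      inf_le_right.lt_of_ne fun h =>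
        hyj (Submodule.eq_of_le_of_finrank_le (inf_eq_right.mp h) (hj i) ▸ i.2)
    have hW'cover (x : V) (hx : x ∈ W j) : ∃ i, x ∈ W' i := by
      obtain ⟨i, hxi, hyi⟩ := hpair x ((hlt j).le hx) y hyU
      exact ⟨⟨i, hyi⟩, hxi, hx⟩
    have hW'rank (i : {i // y ∈ W i}) : Module.rank K (W' i) ≤ n := by
      have hlt' : W' i < W i := inf_le_left.lt_of_ne fun h => hyj (inf_eq_left.mp h i.2)
      have := Submodule.finrank_lt_finrank_of_lt hlt'
      have := finrank_le_of_rank_le (hrank i)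
      rw [← finrank_eq_rank]
      exact_mod_cast (by omega : finrank K (W' i) ≤ n)
    exact (ih (W j) W' hW'lt hW'cover hW'rank).trans (lift_le.mpr (mk_subtype_le _))

theorem stmt_0_general {K : Type u} {V : Type v} {I : Type w}
    [Field K] [AddCommGroup V] [Module K V]
    (W : I → Submodule K V)
    (hproper : ∀ i, W i ≠ ⊤)
    (hcover : ∀ v : V, ∃ i, v ∈ W i)
    (hsup : (⨆ i, Module.rank K ↥(W i)) < Cardinal.aleph0) :
    Cardinal.lift.{w} (Cardinal.mk K) ≤ Cardinal.lift.{u} (Cardinal.mk I) := by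
  obtain ⟨n, hn⟩ := lt_aleph0.mp hsup
  have hbdd : BddAbove (Set.range fun i => Module.rank K (W i)) :=
    ⟨Module.rank K V, Set.forall_mem_range.mpr fun i => Submodule.rank_le (W i)⟩
  exact lift_mk_le_of_forall_mem_of_rank_le n ⊤ W (fun i => (hproper i).lt_top)
    (fun v _ => hcover v) (fun i => hn ▸ le_ciSup hbdd i)

/-- **Lemma 1 (linear algebra).**
Let `V` be a vector space over an infinite field `K`.  Suppose `V` is the union
`V = ⋃_{i ∈ I} W i` of proper linear subspaces `W i` of `V` such that
`sup_{i ∈ I} dim_K (W i)` is finite.  Then `|I| ≥ |K|`. -/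
theorem stmt_0 {K : Type u} {V : Type v} {I : Type w}
    [Field K] [Infinite K] [AddCommGroup V] [Module K V]
    (W : I → Submodule K V)
    (hproper : ∀ i, W i ≠ ⊤)
    (hcover : ∀ v : V, ∃ i, v ∈ W i)
    (hsup : (⨆ i, Module.rank K ↥(W i)) < Cardinal.aleph0) :
    Cardinal.lift.{w} (Cardinal.mk K) ≤ Cardinal.lift.{u} (Cardinal.mk I) :=
  stmt_0_general W hproper hcover hsup
end

section
/- Let V be a finite-dimensional vector space over an infinite field K with dim_K(V) ≥ 1. If V is a union of fewer than |K| proper linear subspaces each of dimension strictly less than dim_K(V), then a contradiction arises; equivalently, V cannot be covered by fewer than |K| proper subspaces. -/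
/-!
Induct on `dim V`. Pick `y ≠ 0`; by induction applied in `V ⧸ K ∙ y` to the images of those
subspaces that contain `y`, some `x` lies in none of them. On the line `x + K y` each subspace
then has at most one point: two points would put both `y` and `x` in it. A cover by the
subspaces would therefore inject `K` into the index set.
-/

open Cardinal

universe u v w

namespace Submodule

variable {K : Type u} {V : Type v} [Field K] [AddCommGroup V] [Module K V]

theorem mem_of_add_smul_mem_of_add_smul_mem {p : Submodule K V} {x y : V} {a b : K}
    (hab : a ≠ b) (ha : x + a • y ∈ p) (hb : x + b • y ∈ p) : y ∈ p ∧ x ∈ p := by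
  have hy : y ∈ p := by
    refine (p.smul_mem_iff (sub_ne_zero.2 hab)).1 ?_
    convert p.sub_mem ha hb using 1
    module
  refine ⟨hy, ?_⟩
  convert p.sub_mem ha (p.smul_mem a hy) using 1
  simp

theorem lift_mk_le_of_forall_add_smul_mem {I : Type w} (W : I → Submodule K V) {x y : V}
    (hx : ∀ i, y ∈ W i → x ∉ W i) (hline : ∀ t : K, ∃ i, x + t • y ∈ W i) :
    lift.{w} #K ≤ lift.{u} #I := by
  choose f hf using hline
  refine lift_mk_le'.2 ⟨⟨f, fun a b hab => by_contra fun hne => ?_⟩⟩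
  obtain ⟨hy, hx'⟩ := mem_of_add_smul_mem_of_add_smul_mem hne (hf a) (hab ▸ hf b)
  exact hx _ hy hx'

theorem exists_forall_notMem_of_lift_mk_lt [FiniteDimensional K V] {I : Type w}
    (W : I → Submodule K V) (hW : ∀ i, W i ≠ ⊤) (hI : lift.{u} #I < lift.{w} #K) :
    ∃ x : V, ∀ i, x ∉ W i := by
  induction hn : Module.finrank K V generalizing V I with
  | zero =>
    have : Subsingleton V := Module.finrank_zero_iff.1 hn
    exact ⟨0, fun i _ => hW i (Subsingleton.elim _ _)⟩
  | succ n ih =>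
    have : Nontrivial V := Module.nontrivial_of_finrank_eq_succ hn
    obtain ⟨y, hy⟩ := exists_ne (0 : V)
    set L := K ∙ y
    have hQ : Module.finrank K (V ⧸ L) = n := by
      have := L.finrank_quotient_add_finrank
      rw [finrank_span_singleton hy] at this
      omega
    let J := {i // y ∈ W i}
    have hJ : lift.{u} #J < lift.{w} #K := (lift_le.2 (mk_subtype_le _)).trans_lt hI
    have hWJ (j : J) : (W j).map L.mkQ ≠ ⊤ := by
      rw [Ne, map_mkQ_eq_top, sup_eq_right.2 ((span_singleton_le_iff_mem _ _).2 j.2)]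
      exact hW j
    obtain ⟨q, hq⟩ := ih (fun j : J => (W j).map L.mkQ) hWJ hJ hQ
    obtain ⟨x, rfl⟩ := L.mkQ_surjective q
    have hx (i : I) (hyi : y ∈ W i) : x ∉ W i := fun hxi => hq ⟨i, hyi⟩ (mem_map_of_mem hxi)
    by_contra! hcover
    exact (lift_mk_le_of_forall_add_smul_mem W hx fun t => hcover _).not_gt hI

end Submodule

theorem stmt_1_general {K : Type u} {V : Type v} {I : Type w}
    [Field K] [AddCommGroup V] [Module K V] [FiniteDimensional K V]
    (W : I → Submodule K V)
    (hlt : ∀ i, Module.finrank K ↥(W i) < Module.finrank K V)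
    (hfew : Cardinal.lift.{u} (Cardinal.mk I) < Cardinal.lift.{w} (Cardinal.mk K))
    (hcover : ∀ v : V, ∃ i, v ∈ W i) :
    False := by
  have hW (i : I) : W i ≠ ⊤ := fun h => (hlt i).ne (h ▸ finrank_top K V)
  obtain ⟨x, hx⟩ := Submodule.exists_forall_notMem_of_lift_mk_lt W hW hfew
  obtain ⟨i, hi⟩ := hcover x
  exact hx i hi

/-- Let `V` be a finite-dimensional vector space over an infinite field `K` with
`dim_K V ≥ 1`.  If `V` is the union of fewer than `|K|` linear subspaces, each of
dimension strictly smaller than `dim_K V` (i.e. proper subspaces), then a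
contradiction arises; equivalently, `V` cannot be covered by fewer than `|K|`
proper subspaces. -/
theorem stmt_1 {K : Type u} {V : Type v} {I : Type w}
    [Field K] [Infinite K] [AddCommGroup V] [Module K V] [FiniteDimensional K V]
    (hdim : 1 ≤ Module.finrank K V)
    (W : I → Submodule K V)
    (hlt : ∀ i, Module.finrank K ↥(W i) < Module.finrank K V)
    (hfew : Cardinal.lift.{u} (Cardinal.mk I) < Cardinal.lift.{w} (Cardinal.mk K))
    (hcover : ∀ v : V, ∃ i, v ∈ W i) :
    False :=
  stmt_1_general W hlt hfew hcover
end

section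
/- Let K be an ample field, f ∈ K[X,Y] an absolutely irreducible polynomial, and y₀ ∈ K with f(0,y₀) = 0 and ∂f/∂Y(0,y₀) ≠ 0. Let C denote the affine plane curve defined by f(x,y) = 0 and π : C → 𝔸¹ the projection (x,y) ↦ x. Then K = { x₁/x₂ : (x₁,y₁), (x₂,y₂) ∈ C(K), x₂ ≠ 0 }, i.e. every element of K is a quotient of two first coordinates of K-rational points of C. -/
/-!
For `c ∈ K`, Hensel's lemma in `K⟦t⟧` lifts the simple point `(0, y₀)` of `C` to points
`(c t, y₁(t))` and `(t, y₂(t))` of `C` over `K⟦t⟧ ⊆ K((t))`, whose first coordinates have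
ratio `c`. This is a solution in `K((t))` of a finite system over `K` (with `t ≠ 0` written as
`t u = 1`), so ampleness provides a solution in `K`, i.e. `c = x₁ / x₂` with `x₂ ≠ 0`.
-/

open MvPolynomial

/-- A field `K` is *ample* (large) iff it is existentially closed in the field of
formal Laurent series `K((t))`: every finite system of polynomial equations over
`K` with a solution in `K((t))` already has a solution in `K`. -/
def IsAmpleField (K : Type*) [Field K] : Prop :=
  ∀ (n k : ℕ) (f : Fin k → MvPolynomial (Fin n) K),
    (∃ x : Fin n → LaurentSeries K, ∀ i, aeval x (f i) = 0) →
    ∃ x : Fin n → K, ∀ i, aeval x (f i) = 0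

namespace Polynomial

variable {R : Type*} [CommRing R]

theorem eval_coeff_zero_mul (g : R[X]) (z : R) :
    g.eval (g.coeff 0 * z) =
      g.coeff 0 * (1 + X * g.divX.comp (C (g.coeff 0) * X)).eval z := by
  set b := g.coeff 0
  calc g.eval (b * z) = (X * g.divX + C b).eval (b * z) := by rw [X_mul_divX_add]
    _ = _ := by simp only [eval_add, eval_mul, eval_X, eval_C, eval_comp, eval_one]; ring

variable [HenselianLocalRing R]

open IsLocalRing in
/-- The reflection `Z ^ (n + 1) * H (1 / Z)` is monic and reduces to `Z ^ n * (Z + c)`, so Hensel's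
lemma gives it a root `w` lifting the unit `-c`, and `w⁻¹` is a root of `H`. -/
theorem exists_isRoot_of_map_residue_eq (H : R[X]) (h₀ : H.coeff 0 = 1) {c : R}
    (hc : IsUnit c) (hH : H.map (residue R) = 1 + C (residue R c) * X) : ∃ z, H.IsRoot z := by
  set n := H.natDegree
  have hP : (H.reflect (n + 1)).Monic := by
    refine monic_of_natDegree_le_of_coeff_eq_one (n + 1) (natDegree_reflect_le.trans ?_) ?_
    · omega
    · rw [coeff_reflect, revAt_le le_rfl, Nat.sub_self, h₀]
  have hPmap : (H.reflect (n + 1)).map (residue R) = X ^ n * (X + C (residue R c)) := by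
    rw [← reflect_map, hH, reflect_add, reflect_one, reflect_C_mul, ← pow_one X, reflect_monomial,
      revAt_le (by omega), Nat.add_sub_cancel]
    ring
  have hc' : residue R c ≠ 0 := (residue_ne_zero_iff_isUnit c).mpr hc
  obtain ⟨w, hw, hwc⟩ := HenselianLocalRing.is_henselian _ hP (-c)
    (by rw [← residue_eq_zero_iff, ← eval_map_apply, hPmap]; simp)
    (by
      rw [← residue_ne_zero_iff_isUnit, ← eval_map_apply, ← derivative_map, hPmap]
      simp [hc'])
  obtain ⟨u, rfl⟩ : IsUnit w := by
    rw [← residue_ne_zero_iff_isUnit, ← sub_add_cancel w (-c), map_add,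
      (residue_eq_zero_iff _).mpr hwc]
    simpa using hc'
  refine ⟨↑u⁻¹, ?_⟩
  have hreflect := eval₂_reflect_mul_pow (RingHom.id R) (↑u⁻¹ : R) (n + 1) H (by omega)
  simp only [invOf_units, inv_inv] at hreflect
  rw [IsRoot, ← eval₂_id, ← hreflect, eval₂_id, hw.eq_zero, zero_mul]

open IsLocalRing in
/-- Hensel's lemma without monicity: writing `g = f(a₀ + Y)` and `b = g(0)`, the polynomial
`H` with `g(b Z) = b H(Z)` satisfies the hypotheses of `exists_isRoot_of_map_residue_eq`. -/
theorem exists_isRoot_of_isUnit_derivative (f : R[X]) (a₀ : R)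
    (h₁ : f.eval a₀ ∈ maximalIdeal R) (h₂ : IsUnit (f.derivative.eval a₀)) :
    ∃ a, f.IsRoot a := by
  set g := taylor a₀ f
  have hb : residue R (g.coeff 0) = 0 := by
    rwa [taylor_coeff_zero, residue_eq_zero_iff]
  obtain ⟨z, hz⟩ := exists_isRoot_of_map_residue_eq
    (1 + X * g.divX.comp (C (g.coeff 0) * X)) (by simp) (c := g.coeff 1)
    (by rwa [taylor_coeff_one]) (by
      rw [Polynomial.map_add, Polynomial.map_mul, map_comp, Polynomial.map_mul, map_C, hb,
        map_zero, zero_mul, comp_zero, ← coeff_zero_eq_eval_zero, coeff_map, coeff_divX,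
        Polynomial.map_one, map_X, mul_comm X])
  refine ⟨g.coeff 0 * z + a₀, ?_⟩
  rw [IsRoot, ← taylor_eval, eval_coeff_zero_mul, hz.eq_zero, mul_zero]

end Polynomial

namespace PowerSeries

variable {R : Type*} [CommRing R]

theorem sModEq_span_X_pow_iff {n : ℕ} {x y : R⟦X⟧} :
    x ≡ y [SMOD (Ideal.span {(X : R⟦X⟧)} ^ n • ⊤ : Submodule R⟦X⟧ R⟦X⟧)] ↔
      ∀ i < n, coeff i x = coeff i y := by
  simp only [SModEq.sub_mem, smul_eq_mul, Ideal.mul_top, Ideal.span_singleton_pow,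
    Ideal.mem_span_singleton, X_pow_dvd_iff, map_sub, sub_eq_zero]

instance : IsAdicComplete (Ideal.span {(X : R⟦X⟧)}) R⟦X⟧ where
  haus' x hx := by
    ext i
    exact sModEq_span_X_pow_iff.mp (hx (i + 1)) i (Nat.lt_succ_self i)
  prec' f hf := by
    refine ⟨mk fun i => coeff i (f (i + 1)), fun n => sModEq_span_X_pow_iff.mpr fun i hi => ?_⟩
    rw [coeff_mk]
    exact (sModEq_span_X_pow_iff.mp (hf (Nat.succ_le_of_lt hi)) i (Nat.lt_succ_self i)).symm

instance {K : Type*} [Field K] : HenselianLocalRing K⟦X⟧ where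
  is_henselian f hf a₀ h₁ h₂ := by
    rw [maximalIdeal_eq_span_X] at h₁ ⊢
    exact HenselianRing.is_henselian f hf a₀ h₁ (h₂.map _)

theorem constantCoeff_aeval_fin_two (a b : R⟦X⟧) (p : MvPolynomial (Fin 2) R) :
    constantCoeff (MvPolynomial.aeval ![a, b] p) = eval ![constantCoeff a, constantCoeff b] p := by
  induction p using MvPolynomial.induction_on with
  | C r => simp
  | add p q hp hq => simp [hp, hq]
  | mul_X p i hp => fin_cases i <;> simp [hp]

end PowerSeries

namespace MvPolynomial

variable {R A : Type*} [CommSemiring R] [CommSemiring A] [Algebra R A]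

theorem apply_aeval_fin_two {B : Type*} [CommSemiring B] [Algebra R B] (φ : A →ₐ[R] B)
    (u v : A) (p : MvPolynomial (Fin 2) R) : φ (aeval ![u, v] p) = aeval ![φ u, φ v] p := by
  rw [comp_aeval_apply]
  congr
  funext i
  fin_cases i <;> rfl

theorem eval_aeval_C_X (a y : A) (p : MvPolynomial (Fin 2) R) :
    (aeval ![Polynomial.C a, Polynomial.X] p).eval y = aeval ![a, y] p := by
  rw [← Polynomial.coe_aeval_eq_eval, ← AlgHom.coe_restrictScalars' R, apply_aeval_fin_two]
  simp

theorem derivative_aeval_C_X (a : A) (p : MvPolynomial (Fin 2) R) :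
    Polynomial.derivative (aeval ![Polynomial.C a, Polynomial.X] p) =
      aeval ![Polynomial.C a, Polynomial.X] (pderiv 1 p) := by
  induction p using MvPolynomial.induction_on with
  | C r => simp [Polynomial.algebraMap_apply]
  | add p q hp hq => simp [hp, hq]
  | mul_X p i hp =>
    fin_cases i <;> simp [Polynomial.derivative_mul, hp, pderiv_X] <;> ring

theorem exists_powerSeries_aeval_eq_zero {K : Type*} [Field K]
    {f : MvPolynomial (Fin 2) K} {y₀ : K} (hroot : eval ![0, y₀] f = 0)
    (hsimple : eval ![0, y₀] (pderiv 1 f) ≠ 0) {a : PowerSeries K}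
    (ha : PowerSeries.constantCoeff a = 0) : ∃ y : PowerSeries K, aeval ![a, y] f = 0 := by
  have hval (p : MvPolynomial (Fin 2) K) :
      PowerSeries.constantCoeff (aeval ![a, PowerSeries.C y₀] p) = eval ![0, y₀] p := by
    rw [PowerSeries.constantCoeff_aeval_fin_two, ha, PowerSeries.constantCoeff_C]
  obtain ⟨y, hy⟩ := Polynomial.exists_isRoot_of_isUnit_derivative
    (aeval ![Polynomial.C a, Polynomial.X] f) (PowerSeries.C y₀)
    (by rw [eval_aeval_C_X, ← PowerSeries.ker_coeff_eq_max_ideal, RingHom.mem_ker, hval, hroot])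
    (by
      rw [derivative_aeval_C_X, eval_aeval_C_X, PowerSeries.isUnit_iff_constantCoeff, hval]
      exact hsimple.isUnit)
  exact ⟨y, by rwa [← eval_aeval_C_X]⟩

end MvPolynomial

theorem exists_laurentSeries_points_mul {K : Type*} [Field K] {f : MvPolynomial (Fin 2) K}
    {y₀ : K} (hroot : eval ![0, y₀] f = 0) (hsimple : eval ![0, y₀] (pderiv 1 f) ≠ 0) (c : K) :
    ∃ x y₁ y₂ : LaurentSeries K,
      x ≠ 0 ∧ aeval ![algebraMap K _ c * x, y₁] f = 0 ∧ aeval ![x, y₂] f = 0 := by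
  obtain ⟨y₁, hy₁⟩ := exists_powerSeries_aeval_eq_zero hroot hsimple
    (a := algebraMap K _ c * PowerSeries.X) (by simp)
  obtain ⟨y₂, hy₂⟩ := exists_powerSeries_aeval_eq_zero hroot hsimple
    (a := PowerSeries.X) (by simp)
  -- `HahnSeries.ofPowerSeriesAlg` is `K`-linear for another (propositionally equal) algebra
  -- structure on `K((t))` than the one `aeval` finds, so the embedding is rebuilt here.
  let ι : PowerSeries K →ₐ[K] LaurentSeries K :=
    { HahnSeries.ofPowerSeries ℤ K with
      commutes' := fun r => (HahnSeries.algebraMap_apply' ℤ r).symm }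
  refine ⟨ι PowerSeries.X, ι y₁, ι y₂, ?_, ?_, ?_⟩
  · exact (map_ne_zero_iff _ HahnSeries.ofPowerSeries_injective).mpr PowerSeries.X_ne_zero
  · rw [← ι.commutes, ← map_mul, ← apply_aeval_fin_two ι, hy₁, map_zero]
  · rw [← apply_aeval_fin_two ι, hy₂, map_zero]

/-- The condition `x ≠ 0` is encoded by the equation `x u = 1`, with the solution `u = x⁻¹`
in `K((t))`. -/
theorem IsAmpleField.exists_points_mul {K : Type*} [Field K] (hK : IsAmpleField K)
    {f : MvPolynomial (Fin 2) K} {c : K}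
    (h : ∃ x y₁ y₂ : LaurentSeries K,
      x ≠ 0 ∧ aeval ![algebraMap K _ c * x, y₁] f = 0 ∧ aeval ![x, y₂] f = 0) :
    ∃ x y₁ y₂ : K, x ≠ 0 ∧ eval ![c * x, y₁] f = 0 ∧ eval ![x, y₂] f = 0 := by
  obtain ⟨x, y₁, y₂, hx, h₁, h₂⟩ := h
  obtain ⟨v, hv⟩ := hK 4 3
    ![aeval ![C c * X 0, X 1] f, aeval ![X 0, X 2] f, X 0 * X 3 - 1] ⟨![x, y₁, y₂, x⁻¹], by
      intro i
      fin_cases i <;> simp [apply_aeval_fin_two, -aeval_eq_bind₁, h₁, h₂, hx]⟩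
  obtain ⟨hv₀, hv₁, hv₂⟩ : _ ∧ _ ∧ _ := ⟨hv 0, hv 1, hv 2⟩
  simp [apply_aeval_fin_two, -aeval_eq_bind₁] at hv₀ hv₁ hv₂
  exact ⟨v 0, v 1, v 2, left_ne_zero_of_mul_eq_one (sub_eq_zero.mp hv₂), hv₀, hv₁⟩

theorem stmt_3_general {K : Type*} [Field K] (hK : IsAmpleField K)
    (f : MvPolynomial (Fin 2) K)
    (y₀ : K) (hroot : eval ![0, y₀] f = 0)
    (hsimple : eval ![0, y₀] (pderiv 1 f) ≠ 0) :
    (Set.univ : Set K) =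
      { c : K | ∃ x₁ y₁ x₂ y₂ : K,
          eval ![x₁, y₁] f = 0 ∧ eval ![x₂, y₂] f = 0 ∧ x₂ ≠ 0 ∧ c = x₁ / x₂ } := by
  refine (Set.eq_univ_of_forall fun c => ?_).symm
  obtain ⟨x, y₁, y₂, hx, h₁, h₂⟩ :=
    hK.exists_points_mul (exists_laurentSeries_points_mul hroot hsimple c)
  exact ⟨c * x, y₁, x, y₂, h₁, h₂, hx, (mul_div_cancel_right₀ c hx).symm⟩

/-- Let `K` be an ample field, `f ∈ K[X,Y]` an absolutely irreducible polynomial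
(variables `X = X 0`, `Y = X 1`), and `y₀ ∈ K` with `f (0, y₀) = 0` and
`(∂f/∂Y)(0, y₀) ≠ 0`.  Let `C : f(x,y) = 0` be the corresponding affine plane
curve and `π (x,y) = x` the first projection.  Then
`K = { x₁/x₂ : (x₁,y₁), (x₂,y₂) ∈ C(K), x₂ ≠ 0 }`, i.e. every element of `K` is
a quotient of two first coordinates of `K`-rational points of `C`. -/
theorem stmt_3 {K : Type*} [Field K] (hK : IsAmpleField K)
    (f : MvPolynomial (Fin 2) K)
    (hirr : Irreducible (MvPolynomial.map (algebraMap K (AlgebraicClosure K)) f))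
    (y₀ : K) (hroot : eval ![0, y₀] f = 0)
    (hsimple : eval ![0, y₀] (pderiv 1 f) ≠ 0) :
    (Set.univ : Set K) =
      { c : K | ∃ x₁ y₁ x₂ y₂ : K,
          eval ![x₁, y₁] f = 0 ∧ eval ![x₂, y₂] f = 0 ∧ x₂ ≠ 0 ∧ c = x₁ / x₂ } :=
  stmt_3_general hK f y₀ hroot hsimple
end

section
/- A purely transcendental proper extension of a field is never an ample field; that is, if K = K₀(T) for some field K₀ and a nonempty set T of elements algebraically independent over K₀, then K is not ample. -/
/-!
Pick `t ∈ T` and an odd `n ≥ 3` that is nonzero in `K`. Since `n` is invertible, Hensel's lemma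
gives an `n`-th root `c` of `1 + t X ^ n` in `K⟦X⟧`, so `(c / X) ^ n + (-1 / X) ^ n = t` in
`K((X))`. But `t` is not a sum of two `n`-th powers in `K = F(t)`, where `F = K₀(T \ {t})` and
`t` is transcendental over `F`: clearing denominators gives `A ^ n + B ^ n = X * C ^ n` in
have degrees `≡ 0` and `≡ 1 mod n`, contradicting Fermat's Last Theorem for polynomials.
-/

open MvPolynomial

namespace Polynomial

variable {k : Type*} [Field k]

theorem natDegree_eq_of_pow_add_pow_eq_pow {n : ℕ} (hn : 3 ≤ n) (hnk : (n : k) ≠ 0)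
    {a b c : k[X]} (hc : c ≠ 0) (heq : a ^ n + b ^ n = c ^ n) :
    a.natDegree = c.natDegree ∨ b.natDegree = c.natDegree := by
  have hn0 : n ≠ 0 := by omega
  have natDegree_eq_of_pow_eq {e : k[X]} (h : e ^ n = c ^ n) : e.natDegree = c.natDegree := by
    simpa [natDegree_pow, hn0] using congrArg natDegree h
  rcases eq_or_ne a 0 with rfl | ha
  · exact .inr (natDegree_eq_of_pow_eq (by simpa [hn0] using heq))
  rcases eq_or_ne b 0 with rfl | hb
  · exact .inl (natDegree_eq_of_pow_eq (by simpa [hn0] using heq))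
  obtain ⟨d, a', -, c', ⟨rfl, -, rfl⟩, ha', -, hc'⟩ :=
    fermatLastTheoremWith'_polynomial hn hnk a b c ha hb hc heq
  left
  rw [natDegree_mul ha'.ne_zero (right_ne_zero_of_mul ha), natDegree_mul hc'.ne_zero
    (right_ne_zero_of_mul ha), natDegree_eq_zero_of_isUnit ha', natDegree_eq_zero_of_isUnit hc']

theorem pow_add_pow_ne_X_mul_pow {n : ℕ} (hn : 3 ≤ n) (hnk : (n : k) ≠ 0)
    (A B : k[X]) {C : k[X]} (hC : C ≠ 0) : A ^ n + B ^ n ≠ X * C ^ n := by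
  intro heq
  have hn0 : 0 < n := by omega
  have hexp : expand k n A ^ n + expand k n B ^ n = (X * expand k n C) ^ n := by
    rw [← map_pow, ← map_pow, ← map_add, heq, map_mul, expand_X, map_pow, mul_pow]
  have hc : X * expand k n C ≠ 0 := mul_ne_zero X_ne_zero ((expand_ne_zero hn0).mpr hC)
  have hdeg (P : k[X]) : (expand k n P).natDegree ≠ (X * expand k n C).natDegree := by
    rw [natDegree_X_mul ((expand_ne_zero hn0).mpr hC), natDegree_expand, natDegree_expand]
    intro h
    have : n ∣ 1 := (Nat.dvd_add_right (dvd_mul_left n _)).mp (h ▸ dvd_mul_left n _)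
    have := Nat.le_of_dvd one_pos this
    omega
  rcases natDegree_eq_of_pow_add_pow_eq_pow hn hnk hc hexp with h | h <;> exact hdeg _ h

end Polynomial

section Transcendental

open Polynomial IntermediateField

variable {F L : Type*} [Field F] [Field L] [Algebra F L] {t : L}

theorem Transcendental.exists_mul_aeval_eq_aeval (ht : Transcendental F t) {x : L}
    (hx : x ∈ F⟮t⟯) : ∃ p q : F[X], q ≠ 0 ∧ x * Polynomial.aeval t q = Polynomial.aeval t p := by
  obtain ⟨r, s, rfl⟩ := (mem_adjoin_simple_iff F x).mp hx
  rcases eq_or_ne s 0 with rfl | hs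
  · exact ⟨0, 1, one_ne_zero, by simp⟩
  · exact ⟨r, s, hs, div_mul_cancel₀ _ fun h => hs (transcendental_iff.mp ht s h)⟩

theorem Transcendental.pow_add_pow_ne (ht : Transcendental F t) {n : ℕ} (hn : 3 ≤ n)
    (hnF : (n : F) ≠ 0) {x y : L} (hx : x ∈ F⟮t⟯) (hy : y ∈ F⟮t⟯) : x ^ n + y ^ n ≠ t := by
  intro hxy
  obtain ⟨p₁, q₁, hq₁, hx⟩ := ht.exists_mul_aeval_eq_aeval hx
  obtain ⟨p₂, q₂, hq₂, hy⟩ := ht.exists_mul_aeval_eq_aeval hy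
  refine pow_add_pow_ne_X_mul_pow hn hnF (p₁ * q₂) (p₂ * q₁) (mul_ne_zero hq₁ hq₂)
    (transcendental_iff_injective.mp ht ?_)
  simp only [map_add, map_mul, map_pow, Polynomial.aeval_X]
  rw [← hx, ← hy]
  linear_combination (Polynomial.aeval t q₁ * Polynomial.aeval t q₂) ^ n * hxy

end Transcendental

theorem PowerSeries.exists_pow_eq_of_constantCoeff_eq_one {R : Type*} [CommRing R] {n : ℕ}
    (hn : n ≠ 0) (hnR : IsUnit (n : R)) {u : PowerSeries R} (hu : constantCoeff u = 1) :
    ∃ c : PowerSeries R, c ^ n = u := by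
  obtain ⟨c, hc, -⟩ := HenselianRing.is_henselian (I := Ideal.span {X})
    (Polynomial.X ^ n - Polynomial.C u) (Polynomial.monic_X_pow_sub_C u hn) 1
    (by simp [Ideal.mem_span_singleton, X_dvd_iff, hu])
    (by
      simp only [Polynomial.derivative_sub, Polynomial.derivative_C, Polynomial.derivative_X_pow,
        sub_zero, Polynomial.eval_mul, Polynomial.eval_pow, Polynomial.eval_X, one_pow, mul_one,
        Polynomial.eval_C]
      rw [← map_natCast (C (R := R))]
      exact (hnR.map _).map _)
  exact ⟨c, by simpa [sub_eq_zero] using hc⟩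

theorem LaurentSeries.exists_pow_add_pow_eq_algebraMap {K : Type*} [Field K] {n : ℕ}
    (hodd : Odd n) (hnK : (n : K) ≠ 0) (t : K) :
    ∃ x y : LaurentSeries K, x ^ n + y ^ n = algebraMap K (LaurentSeries K) t := by
  obtain ⟨c, hc⟩ := PowerSeries.exists_pow_eq_of_constantCoeff_eq_one hodd.pos.ne'
    hnK.isUnit (u := 1 + PowerSeries.C t * PowerSeries.X ^ n) (by simp [hodd.pos.ne'])
  set z : LaurentSeries K := HahnSeries.ofPowerSeries ℤ K PowerSeries.X
  have hz : z ≠ 0 := by simp [z]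
  have hcz :
      HahnSeries.ofPowerSeries ℤ K c ^ n = 1 + algebraMap K (LaurentSeries K) t * z ^ n := by
    rw [← map_pow, hc]
    simp [z, HahnSeries.algebraMap_apply']
  refine ⟨HahnSeries.ofPowerSeries ℤ K c / z, -1 / z, ?_⟩
  rw [div_pow, div_pow, hcz, hodd.neg_one_pow]
  field_simp
  ring

theorem IsAmpleField.exists_aeval_eq_zero {K : Type*} [Field K] (hK : IsAmpleField K) {n : ℕ}
    (f : MvPolynomial (Fin n) K) (h : ∃ x : Fin n → LaurentSeries K, aeval x f = 0) :
    ∃ x : Fin n → K, aeval x f = 0 := by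
  simpa using hK n 1 (fun _ : Fin 1 => f) (by simpa using h)

theorem exists_odd_three_le_natCast_ne_zero (K : Type*) [Field K] :
    ∃ n : ℕ, Odd n ∧ 3 ≤ n ∧ (n : K) ≠ 0 := by
  by_cases h3 : (3 : K) = 0
  · refine ⟨5, by decide, by norm_num, fun h5 => one_ne_zero (α := K) ?_⟩
    push_cast at h5
    linear_combination 2 * h3 - h5
  · exact ⟨3, by decide, le_rfl, by exact_mod_cast h3⟩

open IntermediateField in
theorem AlgebraicIndependent.exists_transcendental_adjoin_simple_eq_top {K₀ K : Type*}
    [Field K₀] [Field K] [Algebra K₀ K] {T : Set K} (hind : AlgebraicIndependent K₀ ((↑) : T → K))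
    (hgen : adjoin K₀ T = ⊤) {t : K} (ht : t ∈ T) :
    ∃ F : IntermediateField K₀ K, Transcendental F t ∧ F⟮t⟯ = ⊤ := by
  have himage : ((↑) '' ({⟨t, ht⟩}ᶜ : Set T)) = T \ {t} := by
    ext; simp [and_comm]
  refine ⟨adjoin K₀ (T \ {t}), ?_, ?_⟩
  · rw [← himage, IntermediateField.transcendental_adjoin_iff]
    exact hind.transcendental_adjoin (i := ⟨t, ht⟩) (by simp)
  · apply restrictScalars_injective K₀
    rw [adjoin_adjoin_left, restrictScalars_top, Set.sdiff_union_of_subset (by simpa), hgen]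

/-- **Purely transcendental proper extensions are not ample.**
If `K = K₀(T)` for a field `K₀` and a nonempty set `T` of elements of `K`
algebraically independent over `K₀`, then `K` is not an ample field. -/
theorem stmt_11 {K₀ K : Type*} [Field K₀] [Field K] [Algebra K₀ K]
    (T : Set K) (hT : T.Nonempty)
    (hind : AlgebraicIndependent K₀ ((↑) : T → K))
    (hgen : IntermediateField.adjoin K₀ T = ⊤) :
    ¬ IsAmpleField K := by
  intro hK
  obtain ⟨t, htT⟩ := hT
  obtain ⟨n, hodd, hn, hnK⟩ := exists_odd_three_le_natCast_ne_zero K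
  obtain ⟨x, hx⟩ :=
      hK.exists_aeval_eq_zero (X 0 ^ n + X 1 ^ n - C t : MvPolynomial (Fin 2) K) <| by
    obtain ⟨a, b, hab⟩ := LaurentSeries.exists_pow_add_pow_eq_algebraMap hodd hnK t
    exact ⟨![a, b], by simp [hab]⟩
  obtain ⟨F, ht, htop⟩ := hind.exists_transcendental_adjoin_simple_eq_top hgen htT
  have hnF : (n : F) ≠ 0 := fun h => hnK (by simpa using congrArg (algebraMap F K) h)
  have hmem (z : K) : z ∈ IntermediateField.adjoin F {t} := htop ▸ IntermediateField.mem_top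
  exact ht.pow_add_pow_ne hn hnF (hmem _) (hmem _) (by simpa [sub_eq_zero] using hx)
end
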